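/- The rows of B^{[n]} with even-weight labels are linearly independent and span the eigenspace of eigenvalue 1 of K^{[n]}; in particular this eigenspace has dimension 2^{n−1}. -/

import Mathlib

open Matrix Finset

noncomputable def K : Matrix (Fin 2) (Fin 2) ℝ := (1 / Real.sqrt 2) • !![1, 1; 1, -1]

noncomputable def B : Matrix (Fin 2) (Fin 2) ℝ :=
  !![1, Real.sqrt 2 - 1; 1, -Real.sqrt 2 - 1]

/-- n-th Kronecker power of a 2×2 matrix, indexed by binary vectors of length n. -/
noncomputable def kronPow (M : Matrix (Fin 2) (Fin 2) ℝ) (n : ℕ) :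
    Matrix (Fin n → Fin 2) (Fin n → Fin 2) ℝ :=
  fun u v => ∏ i, M (u i) (v i)

def wt {n : ℕ} (v : Fin n → Fin 2) : ℕ := (univ.filter fun i => v i = 1).card

/-! Since `B * K = diag(1, -1) * B` and Kronecker powers are multiplicative, the rows of
`B^[n]` are eigenvectors of `K^[n]` (acting on the right), row `u` with eigenvalue
`(-1) ^ wt u`. As `B` is invertible these rows form a basis, and the eigenspace of an operator
that is diagonal in a basis is spanned by the basis vectors carrying that eigenvalue.
Finally `∑ u, (-1) ^ wt u = ∏ i, (1 - 1) = 0`, so exactly half of the labels have even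
weight. -/

theorem Module.Basis.eigenspace_eq_span_image {ι K V : Type*} [Field K] [AddCommGroup V]
    [Module K V] (b : Module.Basis ι K V) {f : Module.End K V} {d : ι → K}
    (hf : ∀ i, f (b i) = d i • b i) (μ : K) :
    Module.End.eigenspace f μ = Submodule.span K (b '' {i | d i = μ}) := by
  have repr_f : ∀ x i, b.repr (f x) i = d i * b.repr x i := by
    intro x i
    have : (Finsupp.lapply i ∘ₗ b.repr.toLinearMap ∘ₗ f) =
        d i • (Finsupp.lapply i ∘ₗ b.repr.toLinearMap) := by
      refine b.ext fun j => ?_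
      by_cases hij : j = i
      · subst hij; simp [hf]
      · simp [hf, hij]
    exact LinearMap.congr_fun this x
  ext x
  rw [Module.End.mem_eigenspace_iff, b.mem_span_image, b.ext_elem_iff]
  simp only [repr_f, map_smul, Finsupp.smul_apply, smul_eq_mul, Set.subset_def,
    Finset.mem_coe, Finsupp.mem_support_iff, Set.mem_ofPred_eq]
  refine forall_congr' fun i => ?_
  rw [← sub_eq_zero, ← sub_mul, mul_eq_zero, sub_eq_zero, or_iff_not_imp_right]

theorem Matrix.row_vecMul_eq_smul_of_mul_eq_diagonal_mul {m R : Type*} [Fintype m]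
    [DecidableEq m] [CommSemiring R] {A M : Matrix m m R} {d : m → R}
    (h : A * M = diagonal d * A) (i : m) : A i ᵥ* M = d i • A i := by
  rw [← mul_apply_eq_vecMul, h]
  ext j
  simp [diagonal_mul]

theorem kronPow_mul (M N : Matrix (Fin 2) (Fin 2) ℝ) (n : ℕ) :
    kronPow (M * N) n = kronPow M n * kronPow N n := by
  ext u v
  simp only [kronPow, mul_apply]
  rw [prod_univ_sum, Fintype.piFinset_univ]
  exact sum_congr rfl fun w _ => prod_mul_distrib

theorem kronPow_diagonal (d : Fin 2 → ℝ) (n : ℕ) :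
    kronPow (diagonal d) n = diagonal fun u => ∏ i, d (u i) := by
  ext u v
  by_cases huv : u = v
  · subst huv
    simp [kronPow]
  · obtain ⟨i, hi⟩ := Function.ne_iff.mp huv
    rw [diagonal_apply_ne _ huv]
    exact prod_eq_zero (mem_univ i) (diagonal_apply_ne _ hi)

theorem kronPow_one (n : ℕ) : kronPow 1 n = 1 := by
  simpa using kronPow_diagonal 1 n

noncomputable def kronPowMonoidHom (n : ℕ) :
    Matrix (Fin 2) (Fin 2) ℝ →* Matrix (Fin n → Fin 2) (Fin n → Fin 2) ℝ where
  toFun M := kronPow M n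
  map_one' := kronPow_one n
  map_mul' M N := kronPow_mul M N n

theorem isUnit_kronPow {M : Matrix (Fin 2) (Fin 2) ℝ} (hM : IsUnit M) (n : ℕ) :
    IsUnit (kronPow M n) :=
  hM.map (kronPowMonoidHom n)

theorem B_mul_K : B * K = diagonal ![1, -1] * B := by
  have hsq : Real.sqrt 2 * Real.sqrt 2 = 2 := Real.mul_self_sqrt zero_le_two
  have hne : Real.sqrt 2 ≠ 0 := by positivity
  ext i j
  fin_cases i <;> fin_cases j <;> simp [B, K, mul_apply] <;> field_simp <;> linarith

theorem isUnit_B : IsUnit B := by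
  rw [isUnit_iff_isUnit_det, isUnit_iff_ne_zero]
  have : 0 < Real.sqrt 2 := by positivity
  simp [B, det_fin_two]
  linarith

theorem prod_vecCons_neg_one_eq_neg_one_pow_wt {n : ℕ} (u : Fin n → Fin 2) :
    ∏ i, (![1, -1] : Fin 2 → ℝ) (u i) = (-1) ^ wt u := by
  rw [wt, ← prod_const, prod_filter]
  refine prod_congr rfl fun i _ => ?_
  generalize u i = a
  fin_cases a <;> simp

theorem sum_neg_one_pow_wt {n : ℕ} (hn : 0 < n) :
    ∑ u : Fin n → Fin 2, (-1 : ℝ) ^ wt u = 0 := by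
  simp_rw [← prod_vecCons_neg_one_eq_neg_one_pow_wt]
  rw [← Fintype.piFinset_univ, ← prod_univ_sum]
  simp [hn.ne']

theorem card_even_wt {n : ℕ} (hn : 0 < n) :
    Fintype.card {v : Fin n → Fin 2 // Even (wt v)} = 2 ^ (n - 1) := by
  have hterm : ∀ u : Fin n → Fin 2, 1 + (-1 : ℝ) ^ wt u = if Even (wt u) then 2 else 0 := by
    intro u
    split_ifs with h
    · rw [h.neg_one_pow]; norm_num
    · rw [(Nat.not_even_iff_odd.mp h).neg_one_pow]; norm_num
  have hcount : (2 : ℝ) ^ n = 2 * Fintype.card {v : Fin n → Fin 2 // Even (wt v)} :=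
    calc (2 : ℝ) ^ n = ∑ u : Fin n → Fin 2, (1 + (-1 : ℝ) ^ wt u) := by
          simp [sum_add_distrib, sum_neg_one_pow_wt hn]
      _ = ∑ u : Fin n → Fin 2, if Even (wt u) then 2 else 0 := sum_congr rfl fun u _ => hterm u
      _ = 2 * Fintype.card {v : Fin n → Fin 2 // Even (wt v)} := by
          rw [← sum_filter, sum_const, Fintype.card_subtype, nsmul_eq_mul, mul_comm]
  have hcount' : 2 * 2 ^ (n - 1) = 2 * Fintype.card {v : Fin n → Fin 2 // Even (wt v)} := by
    rw [← pow_succ', Nat.sub_add_cancel hn]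
    exact_mod_cast hcount
  exact (Nat.eq_of_mul_eq_mul_left two_pos hcount').symm

theorem kronPow_B_mul_kronPow_K (n : ℕ) :
    kronPow B n * kronPow K n = diagonal (fun u => (-1) ^ wt u) * kronPow B n := by
  rw [← kronPow_mul, B_mul_K, kronPow_mul, kronPow_diagonal]
  simp_rw [prod_vecCons_neg_one_eq_neg_one_pow_wt]

/-- The rows of B^{[n]} with even-weight labels are linearly independent and span the
eigenspace of eigenvalue 1 of K^{[n]} (acting on row vectors); in particular that
eigenspace has dimension 2^{n−1}. -/
theorem stmt_5 (n : ℕ) (hn : 0 < n) :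
    LinearIndependent ℝ (fun v : {v : Fin n → Fin 2 // Even (wt v)} => kronPow B n v.1) ∧
    Submodule.span ℝ
        (Set.range fun v : {v : Fin n → Fin 2 // Even (wt v)} => kronPow B n v.1) =
      Module.End.eigenspace (kronPow K n).vecMulLinear (1 : ℝ) ∧
    Module.finrank ℝ (Module.End.eigenspace (kronPow K n).vecMulLinear (1 : ℝ)) =
      2 ^ (n - 1) := by
  have hrows : LinearIndependent ℝ (kronPow B n).row :=
    linearIndependent_rows_of_isUnit (isUnit_kronPow isUnit_B n)
  let b :=
    basisOfLinearIndependentOfCardEqFinrank hrows (Module.finrank_fintype_fun_eq_card ℝ).symm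
  have heven : LinearIndependent ℝ
      (fun v : {v : Fin n → Fin 2 // Even (wt v)} => kronPow B n v.1) :=
    hrows.comp Subtype.val Subtype.val_injective
  have hspan : Submodule.span ℝ
      (Set.range fun v : {v : Fin n → Fin 2 // Even (wt v)} => kronPow B n v.1) =
      Module.End.eigenspace (kronPow K n).vecMulLinear (1 : ℝ) := by
    have hb : ∀ u, (kronPow K n).vecMulLinear (b u) = (-1 : ℝ) ^ wt u • b u := fun u => by
      rw [coe_basisOfLinearIndependentOfCardEqFinrank, vecMulLinear_apply]
      exact row_vecMul_eq_smul_of_mul_eq_diagonal_mul (kronPow_B_mul_kronPow_K n) u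
    have heigen : {u : Fin n → Fin 2 | (-1 : ℝ) ^ wt u = 1} = {u | Even (wt u)} :=
      Set.ext fun u => neg_one_pow_eq_one_iff_even (by norm_num)
    rw [b.eigenspace_eq_span_image hb, heigen, Set.image_eq_range,
      coe_basisOfLinearIndependentOfCardEqFinrank]
    rfl
  refine ⟨heven, hspan, ?_⟩
  rw [← hspan, finrank_span_eq_card heven, card_even_wt hn]
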